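/- If two processes are provably equal in AX^b (axioms A1–A4 plus B) then they are rooted branching bisimilar (soundness). -/

import Mathlib

namespace NDB

/-- The minimal process language `E ::= 0 | α.E | E + E`. -/
inductive NE (Act : Type) : Type where
  | zero : NE Act
  | pre : Act → NE Act → NE Act
  | plus : NE Act → NE Act → NE Act

variable {Act : Type}

/-- The SOS transition relation. -/
inductive step : NE Act → Act → NE Act → Prop where
  | pre (α : Act) (E : NE Act) : step (.pre α E) α E
  | left {E₁ E₂ : NE Act} {α : Act} {E' : NE Act} :
      step E₁ α E' → step (.plus E₁ E₂) α E'
  | right {E₁ E₂ : NE Act} {α : Act} {E' : NE Act} :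
      step E₂ α E' → step (.plus E₁ E₂) α E'

variable (τ : Act)

/-- `E →(α) E'` : a transition, or a vacuous step when `α = τ`. -/
def opt (E : NE Act) (α : Act) (E' : NE Act) : Prop :=
  step E α E' ∨ (α = τ ∧ E' = E)

/-- `E ⟹ E'` : the reflexive-transitive closure of `→(τ)`. -/
def wk : NE Act → NE Act → Prop :=
  Relation.ReflTransGen (fun E E' => opt τ E τ E')

/-- Branching bisimulation relations. -/
def IsBB (R : NE Act → NE Act → Prop) : Prop :=
  Symmetric R ∧ ∀ E F α E', R E F → step E α E' →
    ∃ F₁ F₂, wk τ F F₁ ∧ opt τ F₁ α F₂ ∧ R E F₁ ∧ R E' F₂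

/-- Branching bisimilarity `≈_b`. -/
def bb (E F : NE Act) : Prop := ∃ R, IsBB τ R ∧ R E F

/-- Rooted branching bisimilarity `≈_rb`. -/
def rbb (E F : NE Act) : Prop :=
  (∀ α E', step E α E' → ∃ F', step F α F' ∧ bb τ E' F') ∧
  (∀ α F', step F α F' → ∃ E', step E α E' ∧ bb τ E' F')

/-- Strong bisimulation relations. -/
def IsSB (R : NE Act → NE Act → Prop) : Prop :=
  Symmetric R ∧ ∀ E F α E', R E F → step E α E' →
    ∃ F', step F α F' ∧ R E' F'

/-- Strong bisimilarity `∼`. -/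
def sb (E F : NE Act) : Prop := ∃ R, IsSB R ∧ R E F

/-- `reach E E'` : `E'` is a derivative of `E`. -/
def reach : NE Act → NE Act → Prop :=
  Relation.ReflTransGen (fun E E' => ∃ α, step E α E')

/-- A process is concrete iff no derivative has an inert `τ`-transition. -/
def Concrete (E : NE Act) : Prop :=
  ∀ E', reach E E' → ∀ E'', step E' τ E'' → ¬ bb τ E' E''

/-- Provable equality in the theory `AX^b` (axioms A1–A4 and B). -/
inductive AXb (τ : Act) : NE Act → NE Act → Prop where
  | refl (E) : AXb τ E E
  | symm {E F} : AXb τ E F → AXb τ F E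
  | trans {E F G} : AXb τ E F → AXb τ F G → AXb τ E G
  | congPre (α : Act) {E F} : AXb τ E F → AXb τ (.pre α E) (.pre α F)
  | congPlusL {E E' F} : AXb τ E E' → AXb τ (.plus E F) (.plus E' F)
  | congPlusR {E F F'} : AXb τ F F' → AXb τ (.plus E F) (.plus E F')
  | A1 (E F) : AXb τ (.plus E F) (.plus F E)
  | A2 (E F G) : AXb τ (.plus (.plus E F) G) (.plus E (.plus F G))
  | A3 (E) : AXb τ (.plus E E) E
  | A4 (E) : AXb τ (.plus E .zero) E
  | B (α : Act) (E F) :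
      AXb τ (.pre α (.plus F (.pre τ (.plus E F)))) (.pre α (.plus E F))

/-! Every axiom and every rule of equational reasoning preserves `rbb`. Transitivity of `bb`
comes from composing bisimilarities, which needs the transfer property along weak steps;
congruence for `+` holds because initial steps of `rbb`-related processes are matched exactly.
Axiom B is sound because the `τ` in `F + τ.(E + F)` is inert: it leads to a state with every option
the source had, so `F + τ.(E + F)` and `E + F` are branching bisimilar, and the prefix `α` makes
them rooted branching bisimilar. -/

section Soundness

variable {τ}

lemma step_pre_iff {α β : Act} {E X : NE Act} : step (.pre α E) β X ↔ β = α ∧ X = E := by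
  constructor
  · rintro ⟨⟩
    exact ⟨rfl, rfl⟩
  · rintro ⟨rfl, rfl⟩
    exact .pre _ _

lemma step_plus_iff {α : Act} {E F X : NE Act} :
    step (.plus E F) α X ↔ step E α X ∨ step F α X := by
  constructor
  · intro h
    cases h with
    | left h => exact .inl h
    | right h => exact .inr h
  · rintro (h | h)
    exacts [.left h, .right h]

lemma not_step_zero {α : Act} {X : NE Act} : ¬ step .zero α X := nofun

lemma bb.refl (E : NE Act) : bb τ E E :=
  ⟨(· = ·), ⟨fun _ _ h => h.symm, fun E _ _ E' h hs => h ▸ ⟨E, E', .refl, .inl hs, rfl, rfl⟩⟩, rfl⟩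

lemma bb.symm {E F : NE Act} : bb τ E F → bb τ F E
  | ⟨R, hR, hEF⟩ => ⟨R, hR, hR.1 hEF⟩

lemma isBB_bb : IsBB τ (bb (Act := Act) τ) := by
  refine ⟨fun _ _ => bb.symm, ?_⟩
  rintro E F α E' ⟨R, hR, hEF⟩ hs
  obtain ⟨F₁, F₂, hw, hopt, h₁, h₂⟩ := hR.2 _ _ _ _ hEF hs
  exact ⟨F₁, F₂, hw, hopt, ⟨R, hR, h₁⟩, ⟨R, hR, h₂⟩⟩

lemma bb.transfer_opt {E F E' : NE Act} {α : Act} (h : bb τ E F) (hopt : opt τ E α E') :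
    ∃ F₁ F₂, wk τ F F₁ ∧ opt τ F₁ α F₂ ∧ bb τ E F₁ ∧ bb τ E' F₂ := by
  rcases hopt with hs | ⟨rfl, rfl⟩
  · exact isBB_bb.2 _ _ _ _ h hs
  · exact ⟨F, F, .refl, .inr ⟨rfl, rfl⟩, h, h⟩

lemma bb.transfer_wk {E F E' : NE Act} (h : bb τ E F) (hw : wk τ E E') :
    ∃ F', wk τ F F' ∧ bb τ E' F' := by
  induction hw with
  | refl => exact ⟨F, .refl, h⟩
  | tail _ hopt ih =>
    obtain ⟨F₁, hw₁, h₁⟩ := ih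
    obtain ⟨F₂, F₃, hw₂, hopt₂, -, h₃⟩ := h₁.transfer_opt hopt
    exact ⟨F₃, (hw₁.trans hw₂).tail hopt₂, h₃⟩

lemma bb.trans {E G F : NE Act} (hEG : bb τ E G) (hGF : bb τ G F) : bb τ E F := by
  refine ⟨fun X Y => ∃ Z, bb τ X Z ∧ bb τ Z Y, ⟨?_, ?_⟩, ⟨G, hEG, hGF⟩⟩
  · rintro X Y ⟨Z, hXZ, hZY⟩
    exact ⟨Z, hZY.symm, hXZ.symm⟩
  · rintro X Y α X' ⟨Z, hXZ, hZY⟩ hs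
    obtain ⟨Z₁, Z₂, hwZ, hoptZ, hXZ₁, hXZ₂⟩ := isBB_bb.2 _ _ _ _ hXZ hs
    obtain ⟨Y₁, hwY, hZY₁⟩ := hZY.transfer_wk hwZ
    obtain ⟨Y₂, Y₃, hwY', hoptY, hZY₂, hZY₃⟩ := hZY₁.transfer_opt hoptZ
    exact ⟨Y₂, Y₃, hwY.trans hwY', hoptY, ⟨Z₁, hXZ₁, hZY₂⟩, ⟨Z₂, hXZ₂, hZY₃⟩⟩

lemma bb_of_forall_step {P Q : NE Act}
    (hPQ : ∀ α P', step P α P' → ∃ Q₁ Q₂, wk τ Q Q₁ ∧ opt τ Q₁ α Q₂ ∧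
      (Q₁ = Q ∨ bb τ P Q₁) ∧ bb τ P' Q₂)
    (hQP : ∀ α Q', step Q α Q' → ∃ P₁ P₂, wk τ P P₁ ∧ opt τ P₁ α P₂ ∧
      (P₁ = P ∨ bb τ Q P₁) ∧ bb τ Q' P₂) :
    bb τ P Q := by
  refine ⟨fun X Y => bb τ X Y ∨ (X = P ∧ Y = Q) ∨ (X = Q ∧ Y = P), ⟨?_, ?_⟩, .inr (.inl ⟨rfl, rfl⟩)⟩
  · rintro X Y (h | ⟨rfl, rfl⟩ | ⟨rfl, rfl⟩)
    exacts [.inl h.symm, .inr (.inr ⟨rfl, rfl⟩), .inr (.inl ⟨rfl, rfl⟩)]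
  · rintro X Y α X' (h | ⟨rfl, rfl⟩ | ⟨rfl, rfl⟩) hs
    · obtain ⟨Y₁, Y₂, hw, hopt, h₁, h₂⟩ := isBB_bb.2 _ _ _ _ h hs
      exact ⟨Y₁, Y₂, hw, hopt, .inl h₁, .inl h₂⟩
    · obtain ⟨Y₁, Y₂, hw, hopt, rfl | h₁, h₂⟩ := hPQ α X' hs
      exacts [⟨_, Y₂, hw, hopt, .inr (.inl ⟨rfl, rfl⟩), .inl h₂⟩, ⟨Y₁, Y₂, hw, hopt, .inl h₁, .inl h₂⟩]
    · obtain ⟨Y₁, Y₂, hw, hopt, rfl | h₁, h₂⟩ := hQP α X' hs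
      exacts [⟨_, Y₂, hw, hopt, .inr (.inr ⟨rfl, rfl⟩), .inl h₂⟩, ⟨Y₁, Y₂, hw, hopt, .inl h₁, .inl h₂⟩]

lemma rbb.bb {E F : NE Act} (h : rbb τ E F) : bb τ E F := by
  refine bb_of_forall_step (fun α E' hs => ?_) (fun α F' hs => ?_)
  · obtain ⟨F', hF', hb⟩ := h.1 α E' hs
    exact ⟨F, F', .refl, .inl hF', .inl rfl, hb⟩
  · obtain ⟨E', hE', hb⟩ := h.2 α F' hs
    exact ⟨E, E', .refl, .inl hE', .inl rfl, hb.symm⟩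

lemma bb_plus_pre_plus (E F : NE Act) : bb τ (.plus F (.pre τ (.plus E F))) (.plus E F) := by
  refine bb_of_forall_step (fun α X hs => ?_) (fun α X hs => ?_)
  · rcases step_plus_iff.1 hs with hF | hτ
    · exact ⟨_, X, .refl, .inl (.right hF), .inl rfl, .refl X⟩
    · obtain ⟨rfl, rfl⟩ := step_pre_iff.1 hτ
      exact ⟨_, _, .refl, .inr ⟨rfl, rfl⟩, .inl rfl, .refl _⟩
  · rcases step_plus_iff.1 hs with hE | hF
    · exact ⟨.plus E F, X, .single (.inl (.right (.pre _ _))), .inl (.left hE), .inr (.refl _),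
        .refl X⟩
    · exact ⟨_, X, .refl, .inl (.left hF), .inl rfl, .refl X⟩

lemma rbb_of_step_iff {E F : NE Act} (h : ∀ α X, step E α X ↔ step F α X) : rbb τ E F :=
  ⟨fun α X hs => ⟨X, (h α X).1 hs, .refl X⟩, fun α X hs => ⟨X, (h α X).2 hs, .refl X⟩⟩

lemma rbb.refl (E : NE Act) : rbb τ E E := rbb_of_step_iff fun _ _ => .rfl

lemma rbb.symm {E F : NE Act} (h : rbb τ E F) : rbb τ F E :=
  ⟨fun α F' hs => (h.2 α F' hs).imp fun _ ⟨hs', hb⟩ => ⟨hs', hb.symm⟩,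
   fun α E' hs => (h.1 α E' hs).imp fun _ ⟨hs', hb⟩ => ⟨hs', hb.symm⟩⟩

lemma rbb.trans {E G F : NE Act} (hEG : rbb τ E G) (hGF : rbb τ G F) : rbb τ E F := by
  constructor
  · intro α E' hs
    obtain ⟨G', hG', hb₁⟩ := hEG.1 α E' hs
    obtain ⟨F', hF', hb₂⟩ := hGF.1 α G' hG'
    exact ⟨F', hF', hb₁.trans hb₂⟩
  · intro α F' hs
    obtain ⟨G', hG', hb₂⟩ := hGF.2 α F' hs
    obtain ⟨E', hE', hb₁⟩ := hEG.2 α G' hG'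
    exact ⟨E', hE', hb₁.trans hb₂⟩

lemma rbb_pre {E F : NE Act} (α : Act) (h : bb τ E F) : rbb τ (.pre α E) (.pre α F) := by
  constructor <;> intro β X hs <;> obtain ⟨rfl, rfl⟩ := step_pre_iff.1 hs
  exacts [⟨F, .pre _ _, h⟩, ⟨E, .pre _ _, h⟩]

lemma rbb.plus {E E' F F' : NE Act} (hE : rbb τ E E') (hF : rbb τ F F') :
    rbb τ (.plus E F) (.plus E' F') := by
  constructor <;> intro α X hs
  · rcases step_plus_iff.1 hs with h | h
    · obtain ⟨Y, hY, hb⟩ := hE.1 α X h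
      exact ⟨Y, .left hY, hb⟩
    · obtain ⟨Y, hY, hb⟩ := hF.1 α X h
      exact ⟨Y, .right hY, hb⟩
  · rcases step_plus_iff.1 hs with h | h
    · obtain ⟨Y, hY, hb⟩ := hE.2 α X h
      exact ⟨Y, .left hY, hb⟩
    · obtain ⟨Y, hY, hb⟩ := hF.2 α X h
      exact ⟨Y, .right hY, hb⟩

end Soundness

/-- Soundness of `AX^b`: provably equal processes are rooted branching bisimilar. -/
theorem statement12 {Act : Type} (τ : Act) (E F : NE Act)
    (h : AXb τ E F) : rbb τ E F := by
  induction h with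
  | refl E => exact .refl E
  | symm _ ih => exact ih.symm
  | trans _ _ ih₁ ih₂ => exact ih₁.trans ih₂
  | congPre α _ ih => exact rbb_pre α ih.bb
  | congPlusL _ ih => exact ih.plus (.refl _)
  | congPlusR _ ih => exact (rbb.refl _).plus ih
  | A1 => exact rbb_of_step_iff fun _ _ => by simp only [step_plus_iff, or_comm]
  | A2 => exact rbb_of_step_iff fun _ _ => by simp only [step_plus_iff, or_assoc]
  | A3 => exact rbb_of_step_iff fun _ _ => by simp only [step_plus_iff, or_self]
  | A4 => exact rbb_of_step_iff fun _ _ => by simp only [step_plus_iff, not_step_zero, or_false]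
  | B α E F => exact rbb_pre α (bb_plus_pre_plus E F)

end NDB
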